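/- arXiv:math/9809135 — 2 statements merged into one kernel-verified Lean document; each statement's English description precedes it below -/
import Mathlib

section
/- The specific triple of pairs ([U0,V0],[U1,V1],[U2,V2]) with U0 = 210201202120102012, V0 = 210201021202102012, U1 = 021012010201210120, V1 = 021012102010210120, U2 = 102120121012021201, V2 = 102120210121021201 satisfies: all 24 words of length 36 of the form W_i ++ W_j, where W_i ∈ {U_i, V_i}, W_j ∈ {U_j, V_j}, and i ≠ j, are square-free. -/
def SqFreeW {α : Type*} (w : List α) : Prop := ¬ ∃ a x b : List α, x ≠ [] ∧ w = a ++ x ++ x ++ b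

def U0 : List (Fin 3) := [2, 1, 0, 2, 0, 1, 2, 0, 2, 1, 2, 0, 1, 0, 2, 0, 1, 2]
def V0 : List (Fin 3) := [2, 1, 0, 2, 0, 1, 0, 2, 1, 2, 0, 2, 1, 0, 2, 0, 1, 2]
def U1 : List (Fin 3) := [0, 2, 1, 0, 1, 2, 0, 1, 0, 2, 0, 1, 2, 1, 0, 1, 2, 0]
def V1 : List (Fin 3) := [0, 2, 1, 0, 1, 2, 1, 0, 2, 0, 1, 0, 2, 1, 0, 1, 2, 0]
def U2 : List (Fin 3) := [1, 0, 2, 1, 2, 0, 1, 2, 1, 0, 1, 2, 0, 2, 1, 2, 0, 1]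
def V2 : List (Fin 3) := [1, 0, 2, 1, 2, 0, 2, 1, 0, 1, 2, 1, 0, 2, 1, 2, 0, 1]

def U : Fin 3 → List (Fin 3) := ![U0, U1, U2]
def V : Fin 3 → List (Fin 3) := ![V0, V1, V2]

def hasSq (w : List (Fin 3)) : Bool :=
  (List.range w.length).any fun i =>
    (List.range (w.length + 1)).any fun l =>
      decide (0 < l) && decide (i + 2 * l ≤ w.length) &&
        decide ((w.drop i).take l = ((w.drop (i + l)).take l))

lemma sqfree_of_check (w : List (Fin 3)) (h : hasSq w = false) : SqFreeW w := by
  rintro ⟨a, x, b, hx, rfl⟩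
  have hne : 0 < x.length := List.length_pos_iff.mpr hx
  apply absurd h
  simp only [hasSq, List.any_eq_true, List.mem_range, Bool.and_eq_true, decide_eq_true_eq,
    Bool.not_eq_false]
  have hlen : (a ++ x ++ x ++ b).length = a.length + x.length + x.length + b.length := by
    simp [Nat.add_assoc]
  refine ⟨a.length, ?_, x.length, ?_, ⟨hne, ?_⟩, ?_⟩
  · omega
  · omega
  · omega
  · have h1 : (a ++ x ++ x ++ b).drop a.length = x ++ x ++ b := by
      rw [show a ++ x ++ x ++ b = a ++ (x ++ x ++ b) by simp, List.drop_left]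
    have h2 : (a ++ x ++ x ++ b).drop (a.length + x.length) = x ++ b := by
      rw [show a ++ x ++ x ++ b = (a ++ x) ++ (x ++ b) by simp,
        show a.length + x.length = (a ++ x).length by simp, List.drop_left]
    rw [h1, h2, show x ++ x ++ b = x ++ (x ++ b) by simp, List.take_left,
      List.take_left]

theorem brinkhuis_concatenations_square_free :
    ∀ i j : Fin 3, i ≠ j →
      ∀ W ∈ ({U i, V i} : Set (List (Fin 3))), ∀ Wp ∈ ({U j, V j} : Set (List (Fin 3))),
        SqFreeW (W ++ Wp) := by
  intro i j hij W hW Wp hWp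
  apply sqfree_of_check
  fin_cases i <;> fin_cases j <;> simp_all [U, V, U0, V0, U1, V1, U2, V2] <;>
    rcases hW with rfl | rfl <;> rcases hWp with rfl | rfl <;> decide
end

section
/- The specific triple of pairs ([U0,V0],[U1,V1],[U2,V2]) with U0 = 210201202120102012, V0 = 210201021202102012, U1 = 021012010201210120, V1 = 021012102010210120, U2 = 102120121012021201, V2 = 102120210121021201 satisfies: for every r with 9 ≤ r < 18, the 12 words consisting of the length-r prefixes and length-r suffixes of the six words U0, U1, U2, V0, V1, V2 are pairwise distinct. -/
theorem brinkhuis_prefixes_suffixes_distinct :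
    ∀ r : ℕ, 9 ≤ r → r < 18 →
      Function.Injective (fun p : Fin 3 × Bool × Bool =>
        (fun w : List (Fin 3) => if p.2.2 then w.take r else w.drop (w.length - r))
          (if p.2.1 then U p.1 else V p.1)) := by
  intro r h9 h18
  interval_cases r <;> decide
end
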